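/- For any n ≥ 1, any K₁, …, Kₙ > 0 and any nonnegative integer k, the iterated integral ∫_0^∞ ∫_{(0,∞)^{n-1}} exp(-Σ_{i=1}^n (B_i + K_i/B_i)) l^k ∏_{i=1}^{n-1}(dB_i/B_i) dl is finite, where B_n := e^{-l/2}√(K₁⋯K_n)/(B₁⋯B_{n-1}). -/

import Mathlib

open MeasureTheory Real

/-!
Bounding `exp (-(Bₙ + Kₙ/Bₙ)) ≤ Bₙ/Kₙ = e^{-l/2} √(K₁⋯Kₙ) / (Kₙ B₁⋯B_{n-1})` produces the decay in `l`
and a second factor `1/Bᵢ` in each remaining coordinate, which `exp (-Kᵢ/Bᵢ) ≤ 2 Bᵢ²/Kᵢ²` absorbs.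
The integrand is thus dominated by `C · ∏ᵢ e^{-Bᵢ} · l^k e^{-l/2}`, integrable on the product of
half-lines.
-/

/-- The last variable `Bₙ` determined by `B₁⋯Bₙ = e^{-l/2}·√(K₁⋯Kₙ)`. -/
noncomputable def lastB (m : ℕ) (K : Fin (m + 1) → ℝ) (l : ℝ) (B : Fin m → ℝ) : ℝ :=
  Real.exp (-l / 2) * Real.sqrt (∏ i, K i) / ∏ i, B i

open Nat in
lemma exp_neg_le_factorial_div_pow {x : ℝ} (hx : 0 < x) (n : ℕ) : exp (-x) ≤ n ! / x ^ n := by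
  rw [exp_neg, inv_le_comm₀ (exp_pos x) (by positivity), inv_div]
  exact pow_div_factorial_le_exp _ hx.le n

lemma exp_neg_add_div_le {x c : ℝ} (hx : 0 < x) (hc : 0 < c) : exp (-(x + c / x)) ≤ x / c := by
  have hcx := exp_neg_le_factorial_div_pow (div_pos hc hx) 1
  rw [neg_add, exp_add]
  calc exp (-x) * exp (-(c / x)) ≤ 1 * (1 / (c / x)) := by
        gcongr
        · exact exp_le_one_iff.2 (by linarith)
        · simpa using hcx
    _ = x / c := by rw [one_mul, one_div_div]

lemma exp_neg_add_div_mul_inv_sq_le {x c : ℝ} (hx : 0 < x) (hc : 0 < c) :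
    exp (-(x + c / x)) * (x ^ 2)⁻¹ ≤ 2 / c ^ 2 * exp (-x) := by
  have hcx := exp_neg_le_factorial_div_pow (div_pos hc hx) 2
  rw [neg_add, exp_add]
  calc exp (-x) * exp (-(c / x)) * (x ^ 2)⁻¹ ≤ exp (-x) * (2 / (c / x) ^ 2) * (x ^ 2)⁻¹ := by
        gcongr
        simpa using hcx
    _ = 2 / c ^ 2 * exp (-x) := by field_simp

lemma integrableOn_pow_mul_exp_neg_mul (k : ℕ) {b : ℝ} (hb : 0 < b) :
    IntegrableOn (fun x : ℝ => x ^ k * exp (-(b * x))) (Set.Ioi 0) := by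
  refine (integrableOn_rpow_mul_exp_neg_mul_rpow (s := k) (by linarith [k.cast_nonneg (α := ℝ)])
    one_pos hb).congr_fun (fun x _ => ?_) measurableSet_Ioi
  simp [rpow_natCast]

lemma integrableOn_univ_pi_prod_mul {ι E F : Type*} [Fintype ι] [MeasureSpace E] [MeasureSpace F]
    [SigmaFinite (volume : Measure E)] [SigmaFinite (volume : Measure F)]
    {f : ι → E → ℝ} {g : F → ℝ} {s : ι → Set E} {t : Set F}
    (hf : ∀ i, IntegrableOn (f i) (s i)) (hg : IntegrableOn g t) :
    IntegrableOn (fun p : (ι → E) × F => (∏ i, f i (p.1 i)) * g p.2)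
      (Set.univ.pi s ×ˢ t) := by
  rw [IntegrableOn, Measure.volume_eq_prod, ← Measure.prod_restrict, volume_pi,
    Measure.restrict_pi_pi]
  exact (Integrable.fintype_prod hf).mul_prod hg

lemma lastB_eq (m : ℕ) (K : Fin (m + 1) → ℝ) (l : ℝ) (B : Fin m → ℝ) :
    lastB m K l B = exp (-(2⁻¹ * l)) * sqrt (∏ i, K i) * ∏ i, (B i)⁻¹ := by
  rw [lastB, Finset.prod_inv_distrib, div_eq_mul_inv]
  ring_nf

lemma expVolume_integrand_le (m : ℕ) (K : Fin (m + 1) → ℝ) (hK : ∀ i, 0 < K i) (k : ℕ)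
    {B : Fin m → ℝ} (hB : ∀ i, 0 < B i) {l : ℝ} (hl : 0 ≤ l) :
    exp (-((∑ i : Fin m, (B i + K i.castSucc / B i)) +
        (lastB m K l B + K (Fin.last m) / lastB m K l B))) * l ^ k * ∏ i, (B i)⁻¹ ≤
      (∏ i, 2 / K i.castSucc ^ 2 * exp (-B i)) *
        (sqrt (∏ i, K i) / K (Fin.last m) * (l ^ k * exp (-(2⁻¹ * l)))) := by
  have hBinv : 0 ≤ ∏ i, (B i)⁻¹ := Finset.prod_nonneg fun i _ => (inv_pos.2 (hB i)).le
  have hL : 0 < lastB m K l B := by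
    have := Finset.prod_pos fun i (_ : i ∈ Finset.univ) => hB i
    have := Finset.prod_pos fun i (_ : i ∈ Finset.univ) => hK i
    unfold lastB
    positivity
  set L := lastB m K l B
  calc exp (-((∑ i : Fin m, (B i + K i.castSucc / B i)) + (L + K (Fin.last m) / L))) * l ^ k *
        ∏ i, (B i)⁻¹
      = exp (-∑ i : Fin m, (B i + K i.castSucc / B i)) * exp (-(L + K (Fin.last m) / L)) *
          l ^ k * ∏ i, (B i)⁻¹ := by rw [neg_add, exp_add]
    _ ≤ exp (-∑ i : Fin m, (B i + K i.castSucc / B i)) * (L / K (Fin.last m)) *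
          l ^ k * ∏ i, (B i)⁻¹ := by
        gcongr _ * ?_ * _ * _
        exact exp_neg_add_div_le hL (hK _)
    _ = (∏ i, exp (-(B i + K i.castSucc / B i)) * (B i ^ 2)⁻¹) *
          (sqrt (∏ i, K i) / K (Fin.last m) * (l ^ k * exp (-(2⁻¹ * l)))) := by
        simp only [L, lastB_eq, ← Finset.sum_neg_distrib, exp_sum, Finset.prod_mul_distrib,
          ← inv_pow, Finset.prod_pow]
        ring
    _ ≤ _ := by
        refine mul_le_mul_of_nonneg_right (Finset.prod_le_prod (fun i _ => ?_)
          fun i _ => exp_neg_add_div_mul_inv_sq_le (hB i) (hK _))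
          (mul_nonneg (div_nonneg (sqrt_nonneg _) (hK _).le)
            (mul_nonneg (pow_nonneg hl k) (exp_pos _).le))
        have := hB i
        positivity

theorem expVolume_moments_finite (m : ℕ) (K : Fin (m + 1) → ℝ) (hK : ∀ i, 0 < K i)
    (k : ℕ) :
    IntegrableOn
      (fun p : (Fin m → ℝ) × ℝ =>
        Real.exp (-((∑ i : Fin m, (p.1 i + K i.castSucc / p.1 i)) +
          (lastB m K p.2 p.1 + K (Fin.last m) / lastB m K p.2 p.1))) *
          p.2 ^ k * ∏ i, (p.1 i)⁻¹)
      ((Set.univ.pi fun _ : Fin m => Set.Ioi (0 : ℝ)) ×ˢ Set.Ioi (0 : ℝ)) := by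
  have hdom := integrableOn_univ_pi_prod_mul
    (f := fun (i : Fin m) x => 2 / K i.castSucc ^ 2 * exp (-x)) (s := fun _ => Set.Ioi 0)
    (fun i => (integrableOn_exp_neg_Ioi 0).const_mul _)
    ((integrableOn_pow_mul_exp_neg_mul k (b := 2⁻¹) (by norm_num)).const_mul
      (sqrt (∏ i, K i) / K (Fin.last m)))
  refine Integrable.mono' hdom ?_ (ae_restrict_of_forall_mem
    ((MeasurableSet.univ_pi fun _ => measurableSet_Ioi).prod measurableSet_Ioi) ?_)
  · unfold lastB
    fun_prop
  · rintro ⟨B, l⟩ ⟨hB, hl : 0 < l⟩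
    have hB : ∀ i, 0 < B i := fun i => hB i (Set.mem_univ i)
    rw [Real.norm_of_nonneg (by
      have := Finset.prod_nonneg fun i (_ : i ∈ Finset.univ) => (inv_pos.2 (hB i)).le
      positivity)]
    exact expVolume_integrand_le m K hK k hB hl.le
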